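/- Let X be a K3 surface with Picard lattice generated by A, E1,...,E5 with Gram matrix [[0,1,0,0,0,0],[1,-2,0,0,0,0],[0,0,-2,0,0,0],[0,0,0,-2,0,0],[0,0,0,0,-2,0],[0,0,0,0,0,-2]]. Let a, b be integers with a + b ≥ 9 and b ≡ 0 (mod 3). Set δ = 3 + 3⌊a/3⌋ - a, M1 = ((a+9+δ)/3) A + 3 E1 - (E3 + ... + E_{δ+2}), and M2 = (b/3) A - E2. Then M1² = 2a, M1·M2 = b, M2² = -2, and M1 + M2 satisfies the nef inequalities: writing M1 + M2 = dA + m1 E1 - Σ_{i≥2} mi Ei one has d ≥ 2m1 ≥ 4 mi ≥ 0 for i ≥ 2, (M1+M2)·A ≥ 3, and (M1+M2)·E5 ≤ 2. -/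

import Mathlib

/-!
Write `δ = 3 - (a mod 3) ∈ {1, 2, 3}`, so that `a + δ = 3k` and the `A`-coefficient of `M1` is
`k + 3`. Then `M1² = 2·3·(k + 3) - 2·(9 + δ) = 2a` because exactly `δ` of the classes
`E3, E4, E5` occur in `M1`, while `M1·M2 = 3·(b/3) = b` and `M2² = -2` are immediate.
For `L = M1 + M2 = (k + 3 + b/3) A + 3 E1 - E2 - (E3 + ... + E_{δ+2})` the nef inequalities
reduce to `k + b/3 ≥ 4`, which is `3(k + b/3) = a + δ + b ≥ 10`.
-/

/-- The bilinear form of the rank-6 lattice with Gram matrix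
`[[0,1],[1,-2]] ⊕ ⟨-2⟩⁴` in the basis `A, E1, ..., E5`. -/
def form6 (u v : Fin 6 → ℤ) : ℤ :=
  u 0 * v 1 + u 1 * v 0 -
    2 * (u 1 * v 1 + u 2 * v 2 + u 3 * v 3 + u 4 * v 4 + u 5 * v 5)

lemma form6_single_zero (u : Fin 6 → ℤ) : form6 u (Pi.single 0 1) = u 1 := by
  simp [form6]

lemma form6_single_of_two_le (u : Fin 6 → ℤ) {i : Fin 6} (hi : 2 ≤ (i : ℕ)) :
    form6 u (Pi.single i 1) = -2 * u i := by
  fin_cases i <;> simp_all [form6]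

lemma delta_bounds {a δ : ℤ} (hδ : δ = 3 + 3 * (a / 3) - a) :
    1 ≤ δ ∧ δ ≤ 3 ∧ 3 ∣ a + δ :=
  ⟨by omega, by omega, ⟨1 + a / 3, by rw [hδ]; ring⟩⟩

lemma neg_one_le_ite_le_zero (n δ : ℤ) :
    -1 ≤ (if n ≤ δ then -1 else 0 : ℤ) ∧ (if n ≤ δ then -1 else 0 : ℤ) ≤ 0 := by
  split_ifs <;> omega

lemma ite_sq_sum_eq {δ : ℤ} (h0 : 0 ≤ δ) (h3 : δ ≤ 3) :
    (if 1 ≤ δ then -1 else 0 : ℤ) * (if 1 ≤ δ then -1 else 0) +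
      (if 2 ≤ δ then -1 else 0 : ℤ) * (if 2 ≤ δ then -1 else 0) +
      (if 3 ≤ δ then -1 else 0 : ℤ) * (if 3 ≤ δ then -1 else 0) = δ := by
  split_ifs <;> omega

theorem stmt_15 (a b δ : ℤ) (hab : 9 ≤ a + b) (hb3 : 3 ∣ b)
    (hδ : δ = 3 + 3 * (a / 3) - a)
    (M1 M2 : Fin 6 → ℤ)
    (hM1 : M1 = ![(a + 9 + δ) / 3, 3, 0,
        if 1 ≤ δ then -1 else 0, if 2 ≤ δ then -1 else 0, if 3 ≤ δ then -1 else 0])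
    (hM2 : M2 = ![b / 3, 0, -1, 0, 0, 0]) :
    form6 M1 M1 = 2 * a ∧ form6 M1 M2 = b ∧ form6 M2 M2 = -2 ∧
    2 * (M1 + M2) 1 ≤ (M1 + M2) 0 ∧
    (∀ i : Fin 6, 2 ≤ (i : ℕ) →
      4 * (-(M1 + M2) i) ≤ 2 * (M1 + M2) 1 ∧ 0 ≤ -(M1 + M2) i) ∧
    3 ≤ form6 (M1 + M2) (Pi.single 0 1) ∧
    form6 (M1 + M2) (Pi.single 5 1) ≤ 2 := by
  obtain ⟨hδ1, hδ3, k, hk⟩ := delta_bounds hδ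
  obtain ⟨c, rfl⟩ := hb3
  rw [show (a + 9 + δ) / 3 = k + 3 by omega] at hM1
  rw [show 3 * c / 3 = c by omega] at hM2
  subst hM1 hM2
  have h3 := neg_one_le_ite_le_zero 1 δ
  have h4 := neg_one_le_ite_le_zero 2 δ
  have h5 := neg_one_le_ite_le_zero 3 δ
  rw [form6_single_zero, form6_single_of_two_le _ (by decide)]
  simp only [form6, Matrix.cons_add_cons, Matrix.empty_add_empty, Matrix.cons_val]
  refine ⟨?_, by ring, by ring, by omega, ?_, le_refl _, by omega⟩
  · linarith [ite_sq_sum_eq (by omega : 0 ≤ δ) hδ3]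
  · intro i hi
    fin_cases i <;> simp only [Fin.reduceFinMk, Matrix.cons_val] at hi ⊢ <;> omega
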